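/- arXiv:2506.19883 — 5 statements merged into one kernel-verified Lean document; each statement's English description precedes it below -/
import Mathlib

section
/- Let f : ℝ^d → ℝ be differentiable with L-Lipschitz gradient (L ≥ 0). Let x, u, d ∈ ℝ^d satisfy ⟨u, d⟩ ≥ ‖d‖², and let η ≥ 0. Then f(x − η·d) ≤ f(x) + (η/2)·‖∇f(x) − u‖² − η·(1/2 − L·η/2)·‖d‖². -/
open scoped RealInnerProductSpace

/-!
Along the segment `t ↦ x + t • v`, the Lipschitz bound on `∇f` makes the slope of `f` exceed
`⟪∇f x, v⟫` by at most `L t ‖v‖²`; integrating over `[0, 1]` gives the descent lemma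
`f (x + v) ≤ f x + ⟪∇f x, v⟫ + L/2 ‖v‖²`. With `v = -η d`, the cross term `-η ⟪∇f x, d⟫` splits as
`-η ⟪∇f x - u, d⟫ - η ⟪u, d⟫`, the first piece is bounded by Young's inequality
`-⟪a, b⟫ ≤ ‖a‖²/2 + ‖b‖²/2`, and the second by `-η ‖d‖²`.
-/

section DescentLemma

variable {E : Type*} [NormedAddCommGroup E] [InnerProductSpace ℝ E] [CompleteSpace E]
  {f : E → ℝ}

theorem hasDerivAt_comp_add_smul (hf : Differentiable ℝ f) (x v : E) (t : ℝ) :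
    HasDerivAt (fun s : ℝ => f (x + s • v)) ⟪gradient f (x + t • v), v⟫ t := by
  have hline : HasDerivAt (fun s : ℝ => x + s • v) v t := by
    simpa using ((hasDerivAt_id t).smul_const v).const_add x
  simpa [InnerProductSpace.toDual_apply_apply, Function.comp_def] using
    (hf (x + t • v)).hasGradientAt.hasFDerivAt.comp_hasDerivAt t hline

theorem inner_gradient_add_smul_sub_le {L : ℝ}
    (hlip : ∀ x y : E, ‖gradient f x - gradient f y‖ ≤ L * ‖x - y‖) (x v : E) {t : ℝ}
    (ht : 0 ≤ t) :
    ⟪gradient f (x + t • v) - gradient f x, v⟫ ≤ L * ‖v‖ ^ 2 * t := by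
  have hdist : ‖x + t • v - x‖ = t * ‖v‖ := by
    rw [add_sub_cancel_left, norm_smul, Real.norm_of_nonneg ht]
  calc ⟪gradient f (x + t • v) - gradient f x, v⟫
      ≤ ‖gradient f (x + t • v) - gradient f x‖ * ‖v‖ := real_inner_le_norm _ _
    _ ≤ L * ‖x + t • v - x‖ * ‖v‖ := by gcongr; exact hlip _ _
    _ = L * ‖v‖ ^ 2 * t := by rw [hdist]; ring

theorem le_add_inner_gradient_add_sq_of_lipschitz_gradient {L : ℝ} (hf : Differentiable ℝ f)
    (hlip : ∀ x y : E, ‖gradient f x - gradient f y‖ ≤ L * ‖x - y‖) (x v : E) :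
    f (x + v) ≤ f x + ⟪gradient f x, v⟫ + L / 2 * ‖v‖ ^ 2 := by
  set φ : ℝ → ℝ := fun t => f (x + t • v) - t * ⟪gradient f x, v⟫ - L * ‖v‖ ^ 2 * (t ^ 2 / 2)
  have hφ : ∀ t, HasDerivAt φ
      (⟪gradient f (x + t • v) - gradient f x, v⟫ - L * ‖v‖ ^ 2 * t) t := fun t => by
    have := ((hasDerivAt_comp_add_smul hf x v t).sub ((hasDerivAt_id t).mul_const ⟪gradient f x, v⟫)).sub
      (((hasDerivAt_pow 2 t).div_const 2).const_mul (L * ‖v‖ ^ 2))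
    exact this.congr_deriv (by rw [inner_sub_left]; ring)
  have hanti : AntitoneOn φ (Set.Ici 0) :=
    antitoneOn_of_hasDerivWithinAt_nonpos (convex_Ici 0)
      (fun t _ => (hφ t).continuousAt.continuousWithinAt) (fun t _ => (hφ t).hasDerivWithinAt)
      (fun t ht => by
        rw [interior_Ici] at ht
        linarith [inner_gradient_add_smul_sub_le hlip x v (le_of_lt ht)])
  have h01 : φ 1 ≤ φ 0 := hanti Set.self_mem_Ici (Set.mem_Ici.2 zero_le_one) zero_le_one
  simp only [φ, zero_smul, add_zero, one_smul] at h01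
  linarith

end DescentLemma

theorem neg_real_inner_le_half_sq_add_half_sq {F : Type*} [NormedAddCommGroup F]
    [InnerProductSpace ℝ F] (a b : F) :
    -⟪a, b⟫ ≤ ‖a‖ ^ 2 / 2 + ‖b‖ ^ 2 / 2 := by
  nlinarith [norm_add_sq_real a b, sq_nonneg ‖a + b‖]

theorem stimulus_descent_general_general {d : ℕ} (f : EuclideanSpace ℝ (Fin d) → ℝ) (L : ℝ)
    (hdiff : Differentiable ℝ f)
    (hlip : ∀ x y : EuclideanSpace ℝ (Fin d), ‖gradient f x - gradient f y‖ ≤ L * ‖x - y‖)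
    (x u dvec : EuclideanSpace ℝ (Fin d))
    (hud : ⟪u, dvec⟫ ≥ ‖dvec‖ ^ 2)
    (η : ℝ) (hη : 0 ≤ η) :
    f (x - η • dvec) ≤
      f x + (η / 2) * ‖gradient f x - u‖ ^ 2 - η * (1 / 2 - L * η / 2) * ‖dvec‖ ^ 2 := by
  have hdescent := le_add_inner_gradient_add_sq_of_lipschitz_gradient hdiff hlip x (-(η • dvec))
  rw [← sub_eq_add_neg, inner_neg_right, real_inner_smul_right, norm_neg, norm_smul,
    Real.norm_of_nonneg hη] at hdescent
  have hsplit : ⟪gradient f x, dvec⟫ = ⟪gradient f x - u, dvec⟫ + ⟪u, dvec⟫ := by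
    rw [inner_sub_left]; ring
  have hyoung := neg_real_inner_le_half_sq_add_half_sq (gradient f x - u) dvec
  nlinarith [mul_le_mul_of_nonneg_left hyoung hη, mul_le_mul_of_nonneg_left hud.le hη]

/-- Descent inequality with inexact gradient: intermediate step of the paper's Lemma 3. -/
theorem stimulus_descent_general {d : ℕ} (f : EuclideanSpace ℝ (Fin d) → ℝ) (L : ℝ)
    (hL : 0 ≤ L) (hdiff : Differentiable ℝ f)
    (hlip : ∀ x y : EuclideanSpace ℝ (Fin d), ‖gradient f x - gradient f y‖ ≤ L * ‖x - y‖)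
    (x u dvec : EuclideanSpace ℝ (Fin d))
    (hud : ⟪u, dvec⟫ ≥ ‖dvec‖ ^ 2)
    (η : ℝ) (hη : 0 ≤ η) :
    f (x - η • dvec) ≤
      f x + (η / 2) * ‖gradient f x - u‖ ^ 2 - η * (1 / 2 - L * η / 2) * ‖dvec‖ ^ 2 :=
  stimulus_descent_general_general f L hdiff hlip x u dvec hud η hη
end

section
/- Let η ≥ 0, L ≥ 0, q ≥ 1 be given, let a, t ∈ ℕ with a·q ≤ t ≤ (a+1)·q − 1, let f : ℝ^d → ℝ, and let (x_j) and (d_j) be sequences in ℝ^d. Assume that for every j with a·q ≤ j ≤ t: f(x_{j+1}) ≤ f(x_j) − (η/4)·‖d_j‖² + (η³·L²/(2q))·Σ_{i=aq}^{j} ‖d_i‖². Then f(x_{t+1}) ≤ f(x_{aq}) − (η/4 − η³·L²/2)·Σ_{j=aq}^{t} ‖d_j‖². -/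
open scoped BigOperators

private lemma telescope_aux {dim : ℕ} (η L : ℝ) (q : ℕ)
    (f : EuclideanSpace ℝ (Fin dim) → ℝ)
    (x d : ℕ → EuclideanSpace ℝ (Fin dim)) (a : ℕ) :
    ∀ t, a * q ≤ t →
      (∀ j, a * q ≤ j → j ≤ t →
        f (x (j + 1)) ≤ f (x j) - (η / 4) * ‖d j‖ ^ 2
          + (η ^ 3 * L ^ 2 / (2 * (q : ℝ))) * ∑ i ∈ Finset.Icc (a * q) j, ‖d i‖ ^ 2) →
      f (x (t + 1)) ≤ f (x (a * q))
        - (η / 4) * ∑ j ∈ Finset.Icc (a * q) t, ‖d j‖ ^ 2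
        + (η ^ 3 * L ^ 2 / (2 * (q : ℝ))) *
            ∑ j ∈ Finset.Icc (a * q) t, ∑ i ∈ Finset.Icc (a * q) j, ‖d i‖ ^ 2 := by
  intro t ht
  induction t, ht using Nat.le_induction with
  | base =>
    intro hstep
    simpa using hstep (a * q) le_rfl le_rfl
  | succ t ht ih =>
    intro hstep
    have h1 := ih (fun j hj hjt => hstep j hj (Nat.le_succ_of_le hjt))
    have h2 := hstep (t + 1) (Nat.le_succ_of_le ht) le_rfl
    have hIcc : Finset.Icc (a * q) (t + 1) = insert (t + 1) (Finset.Icc (a * q) t) := by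
      ext i; simp only [Finset.mem_Icc, Finset.mem_insert]; omega
    rw [hIcc, Finset.sum_insert (by simp), Finset.sum_insert (by simp), hIcc]
    rw [hIcc] at h2
    linarith

/-- Telescoped per-window descent bound (Eq. (16) in the proof of Theorem 1). -/
theorem stimulus_window_telescope {dim : ℕ} (η L : ℝ) (hη : 0 ≤ η) (hL : 0 ≤ L)
    (q : ℕ) (hq : 1 ≤ q) (a t : ℕ) (hat : a * q ≤ t) (hta : t ≤ (a + 1) * q - 1)
    (f : EuclideanSpace ℝ (Fin dim) → ℝ)
    (x d : ℕ → EuclideanSpace ℝ (Fin dim))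
    (hstep : ∀ j, a * q ≤ j → j ≤ t →
      f (x (j + 1)) ≤ f (x j) - (η / 4) * ‖d j‖ ^ 2
        + (η ^ 3 * L ^ 2 / (2 * (q : ℝ))) * ∑ i ∈ Finset.Icc (a * q) j, ‖d i‖ ^ 2) :
    f (x (t + 1)) ≤ f (x (a * q))
      - (η / 4 - η ^ 3 * L ^ 2 / 2) * ∑ j ∈ Finset.Icc (a * q) t, ‖d j‖ ^ 2 := by
  have hmain := telescope_aux η L q f x d a t hat hstep
  set S := ∑ j ∈ Finset.Icc (a * q) t, ‖d j‖ ^ 2 with hS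
  have hSnn : 0 ≤ S := Finset.sum_nonneg fun i _ => by positivity
  have hqpos : (0:ℝ) < q := by exact_mod_cast hq
  -- bound the double sum
  have hdouble : ∑ j ∈ Finset.Icc (a * q) t, ∑ i ∈ Finset.Icc (a * q) j, ‖d i‖ ^ 2
      ≤ (q : ℝ) * S := by
    have hcard : (Finset.Icc (a * q) t).card ≤ q := by
      rw [Nat.card_Icc]
      have h' : (a + 1) * q = a * q + q := by ring
      omega
    calc ∑ j ∈ Finset.Icc (a * q) t, ∑ i ∈ Finset.Icc (a * q) j, ‖d i‖ ^ 2
        ≤ ∑ _j ∈ Finset.Icc (a * q) t, S := by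
          apply Finset.sum_le_sum
          intro j hj
          apply Finset.sum_le_sum_of_subset_of_nonneg
          · exact Finset.Icc_subset_Icc_right (Finset.mem_Icc.mp hj).2
          · intro i _ _; positivity
      _ = ((Finset.Icc (a * q) t).card : ℝ) * S := by rw [Finset.sum_const, nsmul_eq_mul]
      _ ≤ (q : ℝ) * S := by
          apply mul_le_mul_of_nonneg_right _ hSnn
          exact_mod_cast hcard
  have hc : 0 ≤ η ^ 3 * L ^ 2 / (2 * (q : ℝ)) := by positivity
  have : (η ^ 3 * L ^ 2 / (2 * (q : ℝ))) *
      ∑ j ∈ Finset.Icc (a * q) t, ∑ i ∈ Finset.Icc (a * q) j, ‖d i‖ ^ 2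
      ≤ η ^ 3 * L ^ 2 / 2 * S := by
    calc _ ≤ (η ^ 3 * L ^ 2 / (2 * (q : ℝ))) * ((q:ℝ) * S) :=
          mul_le_mul_of_nonneg_left hdouble hc
      _ = η ^ 3 * L ^ 2 / 2 * S := by field_simp
  linarith
end

section
/- Deterministic form of Theorem 1 (STIMULUS, non-convex rate O(1/T)). Let S ≥ 1, L > 0, 0 < η ≤ 1/(2L), q ≥ 1, and let f_1, …, f_S : ℝ^d → ℝ be differentiable with L-Lipschitz gradients, with f_1 bounded below by f* ∈ ℝ. Let (x_t)_{t∈ℕ} in ℝ^d, weight vectors λ_t in the probability simplex Δ_S, and vectors u_t^s ∈ ℝ^d be sequences such that, with d_t := Σ_{s=1}^S λ_t^s·u_t^s: (i) x_{t+1} = x_t − η·d_t for all t; (ii) ⟨u_t^s, d_t⟩ ≥ ‖d_t‖² for all t and s; (iii) ‖∇f_s(x_t) − u_t^s‖² ≤ (L²/q)·Σ_{i=q·⌊t/q⌋}^{t−1} ‖x_{i+1} − x_i‖² for all t and s (in particular u_t^s = ∇f_s(x_t) whenever q divides t). Then for every T ≥ 1: (1/T)·Σ_{t=0}^{T−1}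 ‖Σ_{s=1}^S λ_t^s·∇f_s(x_t)‖² ≤ (2·S·L²·η² + 2)·8·(f_1(x_0) − f*)/(η·T). -/
/-!
Along the iterates, the descent lemma together with `⟪u_t, d_t⟫ ≥ ‖d_t‖²` and `L η ≤ 1/2`
makes `f₁` decrease by `η/4 ‖d_t‖²`, up to `η/2` times the squared estimation error at `x_t`.
The error at step `t` is bounded by the squared steps since the last checkpoint `q ⌊t/q⌋`,
and each step lies in fewer than `q` such windows, so the summed errors are at most
`L² η² ∑ ‖d_t‖² ≤ ¼ ∑ ‖d_t‖²`. Telescoping gives `∑ ‖d_t‖² ≤ 8 (f₁(x₀) - f*) / η`, and by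
convexity `‖∑ λ_s ∇f_s(x_t)‖²` is at most twice the estimation error plus `2 ‖d_t‖²`.
-/

open scoped RealInnerProductSpace BigOperators

open Finset

section Smooth

variable {E : Type*} [NormedAddCommGroup E] [InnerProductSpace ℝ E] [CompleteSpace E]
  {f : E → ℝ} {L : ℝ}

theorem hasDerivAt_apply_add_smul {x v : E} {t : ℝ} (hf : DifferentiableAt ℝ f (x + t • v)) :
    HasDerivAt (fun t : ℝ => f (x + t • v)) ⟪gradient f (x + t • v), v⟫ t := by
  have hline : HasDerivAt (fun s : ℝ => x + s • v) v t := by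
    simpa using ((hasDerivAt_id t).smul_const v).const_add x
  rw [inner_gradient_left]
  exact hf.hasFDerivAt.comp_hasDerivAt t hline

theorem apply_add_le_of_lipschitz_gradient (hf : Differentiable ℝ f)
    (hlip : ∀ a b, ‖gradient f a - gradient f b‖ ≤ L * ‖a - b‖) (x v : E) :
    f (x + v) ≤ f x + ⟪gradient f x, v⟫ + L / 2 * ‖v‖ ^ 2 := by
  set φ : ℝ → ℝ := fun t => f (x + t • v) - t * ⟪gradient f x, v⟫ - L / 2 * t ^ 2 * ‖v‖ ^ 2
  have hφ : ∀ t, HasDerivAt φ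
      (⟪gradient f (x + t • v) - gradient f x, v⟫ - L * t * ‖v‖ ^ 2) t := fun t => by
    refine (((hasDerivAt_apply_add_smul (hf _)).sub ((hasDerivAt_id t).mul_const
      ⟪gradient f x, v⟫)).sub (((hasDerivAt_pow 2 t).const_mul (L / 2)).mul_const
        (‖v‖ ^ 2))).congr_deriv ?_
    simp only [inner_sub_left, Nat.cast_ofNat]
    ring
  have hanti : AntitoneOn φ (Set.Icc 0 1) := by
    refine antitoneOn_of_hasDerivWithinAt_nonpos (convex_Icc 0 1)
      (HasDerivAt.continuousOn fun t _ => hφ t) (fun t _ => (hφ t).hasDerivWithinAt) ?_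
    intro t ht
    rw [interior_Icc] at ht
    have := (real_inner_le_norm _ _).trans (mul_le_mul_of_nonneg_right
      (hlip (x + t • v) x) (norm_nonneg v))
    rw [add_sub_cancel_left, norm_smul, Real.norm_of_nonneg ht.1.le] at this
    linarith
  have := hanti (by simp) (by simp) zero_le_one
  simp only [φ, one_smul, zero_smul, add_zero, one_pow, zero_pow two_ne_zero, one_mul, mul_one,
    zero_mul, mul_zero, sub_zero] at this
  linarith

theorem apply_sub_smul_le_of_norm_sq_le_inner (hf : Differentiable ℝ f)
    (hlip : ∀ a b, ‖gradient f a - gradient f b‖ ≤ L * ‖a - b‖) {η : ℝ} (hη : 0 ≤ η)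
    (hLη : L * η ≤ 1 / 2) (x : E) {u d : E} (hud : ‖d‖ ^ 2 ≤ ⟪u, d⟫) :
    f (x - η • d) ≤ f x - η / 4 * ‖d‖ ^ 2 + η / 2 * ‖gradient f x - u‖ ^ 2 := by
  have hdesc := apply_add_le_of_lipschitz_gradient hf hlip x (-(η • d))
  rw [← sub_eq_add_neg, inner_neg_right, real_inner_smul_right, norm_neg, norm_smul,
    Real.norm_of_nonneg hη] at hdesc
  -- `0 ≤ ‖e + d‖²` with `e = ∇f x - u` absorbs the estimation error into `‖d‖²`.
  have herr : 0 ≤ ‖gradient f x - u + d‖ ^ 2 := sq_nonneg _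
  have hsplit : ⟪gradient f x, d⟫ = ⟪u, d⟫ + ⟪gradient f x - u, d⟫ := by
    rw [inner_sub_left]; ring
  rw [norm_add_sq_real] at herr
  have hquad : L / 2 * (η * ‖d‖) ^ 2 ≤ η / 4 * ‖d‖ ^ 2 := by
    rw [show L / 2 * (η * ‖d‖) ^ 2 = (L * η) * (η / 2 * ‖d‖ ^ 2) by ring]
    nlinarith [mul_nonneg hη (sq_nonneg ‖d‖)]
  nlinarith

end Smooth

theorem norm_sum_smul_sq_le_two_mul_add {E ι : Type*} [NormedAddCommGroup E] [NormedSpace ℝ E]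
    {s : Finset ι} {w : ι → ℝ} (hw₀ : ∀ i, 0 ≤ w i) (hw₁ : ∑ i ∈ s, w i = 1)
    {g u : ι → E} {B : ℝ} (hB : ∀ i, ‖g i - u i‖ ^ 2 ≤ B) :
    ‖∑ i ∈ s, w i • g i‖ ^ 2 ≤ 2 * B + 2 * ‖∑ i ∈ s, w i • u i‖ ^ 2 := by
  have hjensen : ‖∑ i ∈ s, w i • (g i - u i)‖ ^ 2 ≤ B :=
    calc ‖∑ i ∈ s, w i • (g i - u i)‖ ^ 2 ≤ ∑ i ∈ s, w i * ‖g i - u i‖ ^ 2 :=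
          (convexOn_univ_norm.pow (fun _ _ => norm_nonneg _) 2).map_sum_le (fun i _ => hw₀ i)
            hw₁ fun _ _ => Set.mem_univ _
      _ ≤ ∑ i ∈ s, w i * B := by gcongr with i; exacts [hw₀ i, hB i]
      _ = B := by rw [← sum_mul, hw₁, one_mul]
  simp only [smul_sub, sum_sub_distrib] at hjensen
  calc ‖∑ i ∈ s, w i • g i‖ ^ 2
      ≤ (‖∑ i ∈ s, w i • u i‖ + ‖∑ i ∈ s, w i • g i - ∑ i ∈ s, w i • u i‖) ^ 2 := by
        gcongr; exact norm_le_norm_add_norm_sub' _ _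
    _ ≤ 2 * (‖∑ i ∈ s, w i • u i‖ ^ 2 + ‖∑ i ∈ s, w i • g i - ∑ i ∈ s, w i • u i‖ ^ 2) :=
        add_sq_le
    _ ≤ 2 * B + 2 * ‖∑ i ∈ s, w i • u i‖ ^ 2 := by linarith

-- The index `i` lies in the window `[q * (t / q), t)` only for `i < t < i + q`.
theorem sum_range_sum_Ico_mul_div_le {M : Type*} [AddCommMonoid M] [PartialOrder M]
    [IsOrderedAddMonoid M] {q : ℕ} (hq : 0 < q) {a : ℕ → M} (ha : ∀ i, 0 ≤ a i) (T : ℕ) :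
    ∑ t ∈ range T, ∑ i ∈ Ico (q * (t / q)) t, a i ≤ q • ∑ i ∈ range T, a i := by
  rw [sum_comm' (t' := range T) (s' := fun i => {t ∈ range T | q * (t / q) ≤ i ∧ i < t})
    (by intro t i; simp only [mem_range, mem_Ico, mem_filter]; omega), smul_sum]
  refine sum_le_sum fun i _ => ?_
  have hcard : #{t ∈ range T | q * (t / q) ≤ i ∧ i < t} ≤ q := by
    refine (card_le_card fun t ht => ?_).trans ((Nat.card_Ioo i (i + q)).trans_le (by omega))
    have := Nat.lt_mul_div_succ t hq
    rw [mem_filter] at ht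
    rw [mul_add_one] at this
    rw [mem_Ioo]
    omega
  rw [sum_const]
  exact nsmul_le_nsmul_left (ha i) hcard

theorem sum_range_le_sub_of_le_sub {α : Type*} [AddCommGroup α] [PartialOrder α]
    [IsOrderedAddMonoid α] {F a : ℕ → α} (h : ∀ t, F (t + 1) ≤ F t - a t) (T : ℕ) :
    ∑ t ∈ range T, a t ≤ F 0 - F T :=
  (sum_le_sum fun t _ => le_sub_comm.1 (h t)).trans_eq (sum_range_sub' F T)

section Iteration

variable {E : Type*} [NormedAddCommGroup E] [InnerProductSpace ℝ E] {η : ℝ} {x d : ℕ → E}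

theorem sum_mul_sum_Ico_norm_sub_sq_le (hx : ∀ t, x (t + 1) = x t - η • d t) {q : ℕ}
    (hq : 0 < q) {C : ℝ} (hC : 0 ≤ C) (T : ℕ) :
    ∑ t ∈ range T, C / q * ∑ i ∈ Ico (q * (t / q)) t, ‖x (i + 1) - x i‖ ^ 2
      ≤ C * η ^ 2 * ∑ t ∈ range T, ‖d t‖ ^ 2 := by
  have hstep : ∀ i, ‖x (i + 1) - x i‖ ^ 2 = η ^ 2 * ‖d i‖ ^ 2 := fun i => by
    rw [hx, sub_sub_cancel_left, norm_neg, norm_smul, mul_pow, Real.norm_eq_abs, sq_abs]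
  calc ∑ t ∈ range T, C / q * ∑ i ∈ Ico (q * (t / q)) t, ‖x (i + 1) - x i‖ ^ 2
      = C / q * ∑ t ∈ range T, ∑ i ∈ Ico (q * (t / q)) t, ‖x (i + 1) - x i‖ ^ 2 :=
        (mul_sum ..).symm
    _ ≤ C / q * (q • ∑ i ∈ range T, ‖x (i + 1) - x i‖ ^ 2) := by
        gcongr; exact sum_range_sum_Ico_mul_div_le hq (fun _ => sq_nonneg _) T
    _ = C * η ^ 2 * ∑ t ∈ range T, ‖d t‖ ^ 2 := by
        simp only [hstep, nsmul_eq_mul, ← mul_sum]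
        field_simp

variable [CompleteSpace E] {f : E → ℝ} {L : ℝ}

theorem sum_sq_norm_le_of_descent (hf : Differentiable ℝ f)
    (hlip : ∀ a b, ‖gradient f a - gradient f b‖ ≤ L * ‖a - b‖) (hη : 0 ≤ η)
    (hLη : L * η ≤ 1 / 2) (hx : ∀ t, x (t + 1) = x t - η • d t) {u : ℕ → E}
    (hud : ∀ t, ‖d t‖ ^ 2 ≤ ⟪u t, d t⟫) {e : ℕ → ℝ}
    (he : ∀ t, ‖gradient f (x t) - u t‖ ^ 2 ≤ e t) (T : ℕ)
    (hsum : ∑ t ∈ range T, e t ≤ 1 / 4 * ∑ t ∈ range T, ‖d t‖ ^ 2) :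
    η / 8 * ∑ t ∈ range T, ‖d t‖ ^ 2 ≤ f (x 0) - f (x T) := by
  have hdesc : ∀ t, f (x (t + 1)) ≤ f (x t) - (η / 4 * ‖d t‖ ^ 2 - η / 2 * e t) := fun t => by
    rw [hx]
    linarith [apply_sub_smul_le_of_norm_sq_le_inner hf hlip hη hLη (x t) (hud t),
      mul_le_mul_of_nonneg_left (he t) (by positivity : 0 ≤ η / 2)]
  have htel := sum_range_le_sub_of_le_sub (F := fun t => f (x t)) hdesc T
  rw [sum_sub_distrib, ← mul_sum, ← mul_sum] at htel
  nlinarith [mul_le_mul_of_nonneg_left hsum hη]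

end Iteration

/-- Deterministic form of Theorem 1: O(1/T) Pareto-stationarity rate of STIMULUS
in the non-convex setting. -/
theorem stimulus_nonconvex_rate {dim : ℕ} (S : ℕ) (hS : 1 ≤ S) (L η : ℝ)
    (hL : 0 < L) (hη0 : 0 < η) (hη : η ≤ 1 / (2 * L)) (q : ℕ) (hq : 1 ≤ q)
    (f : Fin S → EuclideanSpace ℝ (Fin dim) → ℝ) (fstar : ℝ)
    (hdiff : ∀ s, Differentiable ℝ (f s))
    (hlip : ∀ s, ∀ x y : EuclideanSpace ℝ (Fin dim),
      ‖gradient (f s) x - gradient (f s) y‖ ≤ L * ‖x - y‖)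
    (hbdd : ∀ y, fstar ≤ f ⟨0, hS⟩ y)
    (x : ℕ → EuclideanSpace ℝ (Fin dim))
    (lam : ℕ → Fin S → ℝ)
    (hlam_nonneg : ∀ t s, 0 ≤ lam t s)
    (hlam_sum : ∀ t, ∑ s : Fin S, lam t s = 1)
    (u : ℕ → Fin S → EuclideanSpace ℝ (Fin dim))
    (dvec : ℕ → EuclideanSpace ℝ (Fin dim))
    (hdvec : ∀ t, dvec t = ∑ s : Fin S, lam t s • u t s)
    (hx : ∀ t, x (t + 1) = x t - η • dvec t)
    (hinner : ∀ t s, ⟪u t s, dvec t⟫ ≥ ‖dvec t‖ ^ 2)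
    (herr : ∀ t s, ‖gradient (f s) (x t) - u t s‖ ^ 2
      ≤ (L ^ 2 / (q : ℝ)) * ∑ i ∈ Finset.Ico (q * (t / q)) t, ‖x (i + 1) - x i‖ ^ 2) :
    ∀ T : ℕ, 1 ≤ T →
      (1 / (T : ℝ)) * ∑ t ∈ Finset.range T,
          ‖∑ s : Fin S, lam t s • gradient (f s) (x t)‖ ^ 2
        ≤ (2 * (S : ℝ) * L ^ 2 * η ^ 2 + 2) * 8 * (f ⟨0, hS⟩ (x 0) - fstar) / (η * T) := by
  intro T _
  set s₀ : Fin S := ⟨0, hS⟩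
  have hLη : L * η ≤ 1 / 2 := by
    rw [le_div_iff₀ (by positivity)] at hη
    linarith
  set D := ∑ t ∈ range T, ‖dvec t‖ ^ 2
  set E : ℕ → ℝ := fun t => L ^ 2 / q * ∑ i ∈ Ico (q * (t / q)) t, ‖x (i + 1) - x i‖ ^ 2
  have hE : ∑ t ∈ range T, E t ≤ L ^ 2 * η ^ 2 * D :=
    sum_mul_sum_Ico_norm_sub_sq_le hx hq (sq_nonneg L) T
  have hD0 : 0 ≤ D := sum_nonneg fun _ _ => sq_nonneg _
  have hD : D ≤ 8 * (f s₀ (x 0) - fstar) / η := by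
    have hLη2 : L ^ 2 * η ^ 2 ≤ 1 / 4 := by nlinarith [mul_pos hL hη0]
    have := sum_sq_norm_le_of_descent (hdiff s₀) (hlip s₀) hη0.le hLη hx (fun t => hinner t s₀)
      (fun t => herr t s₀) T (hE.trans (by gcongr))
    rw [le_div_iff₀ hη0]
    linarith [hbdd (x T)]
  have hG : ∑ t ∈ range T, ‖∑ s : Fin S, lam t s • gradient (f s) (x t)‖ ^ 2
      ≤ 2 * ∑ t ∈ range T, E t + 2 * D := by
    rw [mul_sum, mul_sum, ← sum_add_distrib]
    exact sum_le_sum fun t _ =>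
      hdvec t ▸ norm_sum_smul_sq_le_two_mul_add (hlam_nonneg t) (hlam_sum t) (herr t)
  have hS1 : (1 : ℝ) ≤ S := by exact_mod_cast hS
  calc 1 / (T : ℝ) * ∑ t ∈ range T, ‖∑ s : Fin S, lam t s • gradient (f s) (x t)‖ ^ 2
      ≤ 1 / T * ((2 * S * L ^ 2 * η ^ 2 + 2) * D) := by
        gcongr
        nlinarith [mul_nonneg (mul_nonneg (sq_nonneg L) (sq_nonneg η)) hD0]
    _ ≤ 1 / T * ((2 * S * L ^ 2 * η ^ 2 + 2) * (8 * (f s₀ (x 0) - fstar) / η)) := by gcongr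
    _ = _ := by ring
end

section
/- Key per-step strongly convex inequality (Eq. (23)). Let S ≥ 1, μ > 0, L ≥ 0, η > 0, and let f_1, …, f_S : ℝ^d → ℝ each be differentiable with L-Lipschitz gradient and μ-strongly convex. Let λ ∈ Δ_S, let u_1, …, u_S ∈ ℝ^d, set d := Σ_{s=1}^S λ_s·u_s, and let x, x* ∈ ℝ^d and x' := x − η·d. Then Σ_{s=1}^S λ_s·(f_s(x') − f_s(x*)) ≤ (1/(2η))·((1 − 3μη/4)·‖x − x*‖² − ‖x' − x*‖²) − (η/2 − μ·η²/8 − L·η²/2)·‖d‖² + (4/μ)·Σ_{s=1}^S λ_s·‖∇f_s(x) − u_s‖². -/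
open scoped RealInnerProductSpace BigOperators

/-!
Each `f_s` lies below its `L`-smooth quadratic model at `x` (evaluated at `x'`) and above its
`μ`-strongly convex model at `x` (evaluated at `x*`); averaging with the weights `λ` gives
`∑ λ_s (f_s x' - f_s x*) ≤ ⟪∑ λ_s ∇f_s x, x' - x*⟫ - μ/2 ‖x - x*‖² + L/2 ‖x' - x‖²`.
Split the averaged gradient as `d + e` with `e = ∑ λ_s (∇f_s x - u_s)`. The `d`-part is computed
exactly by expanding `‖x' - x*‖² = ‖(x - x*) - η d‖²`; the `e`-part is bounded by Young's
inequality with `δ = μ/8`, once against `x - x*` and once against `η d`; finally Jensen's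
inequality for `‖·‖²` bounds `‖e‖²` by `∑ λ_s ‖∇f_s x - u_s‖²`.
-/

section InnerProductSpace

variable {F : Type*} [NormedAddCommGroup F] [InnerProductSpace ℝ F]

theorem real_inner_le_norm_sq_div_add_mul_norm_sq {δ : ℝ} (hδ : 0 < δ) (a b : F) :
    ⟪a, b⟫ ≤ ‖a‖ ^ 2 / (4 * δ) + δ * ‖b‖ ^ 2 := by
  have hsq : ‖a‖ ^ 2 / (4 * δ) + δ * ‖b‖ ^ 2 - ‖a‖ * ‖b‖ = (‖a‖ - 2 * δ * ‖b‖) ^ 2 / (4 * δ) := by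
    field_simp; ring
  have : 0 ≤ (‖a‖ - 2 * δ * ‖b‖) ^ 2 / (4 * δ) := by positivity
  linarith [real_inner_le_norm a b]

theorem norm_sum_smul_sq_le {ι : Type*} {t : Finset ι} {w : ι → ℝ} (hw₀ : ∀ i ∈ t, 0 ≤ w i)
    (hw₁ : ∑ i ∈ t, w i = 1) (v : ι → F) :
    ‖∑ i ∈ t, w i • v i‖ ^ 2 ≤ ∑ i ∈ t, w i * ‖v i‖ ^ 2 :=
  (convexOn_univ_norm.pow (fun _ _ => norm_nonneg _) 2).map_sum_le hw₀ hw₁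
    (fun _ _ => Set.mem_univ _)

theorem inner_sub_smul_sub_eq {η : ℝ} (hη : η ≠ 0) (v x z : F) :
    ⟪v, x - η • v - z⟫ = 1 / (2 * η) * (‖x - z‖ ^ 2 - ‖x - η • v - z‖ ^ 2) - η / 2 * ‖v‖ ^ 2 := by
  have hstep : x - η • v - z = (x - z) - η • v := by abel
  rw [hstep, norm_sub_sq_real (x - z), inner_sub_right, real_inner_smul_right,
    real_inner_smul_right, real_inner_self_eq_norm_sq, norm_smul, real_inner_comm,
    Real.norm_eq_abs, mul_pow, sq_abs]
  field_simp
  ring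

end InnerProductSpace

section Smooth

variable {F : Type*} [NormedAddCommGroup F] [InnerProductSpace ℝ F] [CompleteSpace F]
  {f : F → ℝ}

theorem HasGradientAt.hasDerivAt_comp_add_smul {g x v : F} {t : ℝ}
    (h : HasGradientAt f g (x + t • v)) :
    HasDerivAt (fun t : ℝ => f (x + t • v)) ⟪g, v⟫ t := by
  have hline : HasDerivAt (fun t : ℝ => x + t • v) v t := by
    simpa using ((hasDerivAt_id t).smul_const v).const_add x
  have hcomp := h.hasFDerivAt.comp_hasDerivAt t hline
  rwa [InnerProductSpace.toDual_apply_apply] at hcomp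

theorem le_add_inner_gradient_add_half_mul_norm_sq {L : ℝ} (hf : Differentiable ℝ f)
    (hlip : ∀ a b : F, ‖gradient f a - gradient f b‖ ≤ L * ‖a - b‖) (x y : F) :
    f y ≤ f x + ⟪gradient f x, y - x⟫ + L / 2 * ‖y - x‖ ^ 2 := by
  set v := y - x
  set c := ⟪gradient f x, v⟫
  have hφ (t : ℝ) : HasDerivAt (fun t : ℝ => f (x + t • v)) ⟪gradient f (x + t • v), v⟫ t :=
    (hf _).hasGradientAt.hasDerivAt_comp_add_smul
  have hB (t : ℝ) : HasDerivAt (fun t : ℝ => f x + t * c + L / 2 * t ^ 2 * ‖v‖ ^ 2)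
      (c + L * t * ‖v‖ ^ 2) t := by
    refine ((((hasDerivAt_id' t).mul_const c).const_add (f x)).add
      (((hasDerivAt_pow 2 t).const_mul (L / 2)).mul_const (‖v‖ ^ 2))).congr_deriv ?_
    ring
  have hbound (t : ℝ) (ht : t ∈ Set.Ico (0 : ℝ) 1) :
      ⟪gradient f (x + t • v), v⟫ ≤ c + L * t * ‖v‖ ^ 2 := by
    have hdiff : ⟪gradient f (x + t • v) - gradient f x, v⟫ ≤ L * t * ‖v‖ ^ 2 :=
      calc ⟪gradient f (x + t • v) - gradient f x, v⟫
          ≤ ‖gradient f (x + t • v) - gradient f x‖ * ‖v‖ := real_inner_le_norm _ _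
        _ ≤ L * ‖x + t • v - x‖ * ‖v‖ := by gcongr; exact hlip _ _
        _ = L * t * ‖v‖ ^ 2 := by
          rw [add_sub_cancel_left, norm_smul, Real.norm_of_nonneg ht.1]; ring
    rwa [inner_sub_left, sub_le_iff_le_add'] at hdiff
  have hcomp := image_le_of_deriv_right_le_deriv_boundary
    (fun t _ => (hφ t).continuousAt.continuousWithinAt) (fun t _ => (hφ t).hasDerivWithinAt)
    (by simp) (fun t _ => (hB t).continuousAt.continuousWithinAt)
    (fun t _ => (hB t).hasDerivWithinAt) hbound (Set.right_mem_Icc.2 zero_le_one)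
  simpa [v] using hcomp

theorem sub_le_of_lipschitz_gradient_of_strongConvex {L μ : ℝ} (hf : Differentiable ℝ f)
    (hlip : ∀ a b : F, ‖gradient f a - gradient f b‖ ≤ L * ‖a - b‖)
    (hsc : ∀ a b : F, f b ≥ f a + ⟪gradient f a, b - a⟫ + (μ / 2) * ‖b - a‖ ^ 2) (x y z : F) :
    f y - f z ≤ ⟪gradient f x, y - z⟫ - μ / 2 * ‖x - z‖ ^ 2 + L / 2 * ‖y - x‖ ^ 2 := by
  have hupper := le_add_inner_gradient_add_half_mul_norm_sq hf hlip x y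
  have hlower := hsc x z
  rw [norm_sub_rev z x] at hlower
  have hinner : ⟪gradient f x, y - z⟫ = ⟪gradient f x, y - x⟫ - ⟪gradient f x, z - x⟫ := by
    rw [← inner_sub_right, sub_sub_sub_cancel_right]
  linarith

theorem sum_mul_sub_le_of_lipschitz_gradient_of_strongConvex {ι : Type*} {t : Finset ι}
    {f : ι → F → ℝ} {L μ : ℝ} (hf : ∀ i, Differentiable ℝ (f i))
    (hlip : ∀ i, ∀ a b : F, ‖gradient (f i) a - gradient (f i) b‖ ≤ L * ‖a - b‖)
    (hsc : ∀ i, ∀ a b : F, f i b ≥ f i a + ⟪gradient (f i) a, b - a⟫ + (μ / 2) * ‖b - a‖ ^ 2)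
    {w : ι → ℝ} (hw₀ : ∀ i ∈ t, 0 ≤ w i) (hw₁ : ∑ i ∈ t, w i = 1) (x y z : F) :
    ∑ i ∈ t, w i * (f i y - f i z)
      ≤ ⟪∑ i ∈ t, w i • gradient (f i) x, y - z⟫ - μ / 2 * ‖x - z‖ ^ 2
        + L / 2 * ‖y - x‖ ^ 2 :=
  calc ∑ i ∈ t, w i * (f i y - f i z)
      ≤ ∑ i ∈ t, w i * (⟪gradient (f i) x, y - z⟫ - μ / 2 * ‖x - z‖ ^ 2
          + L / 2 * ‖y - x‖ ^ 2) :=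
        Finset.sum_le_sum fun i hi => mul_le_mul_of_nonneg_left
          (sub_le_of_lipschitz_gradient_of_strongConvex (hf i) (hlip i) (hsc i) x y z) (hw₀ i hi)
    _ = _ := by
        simp only [mul_add, mul_sub, Finset.sum_add_distrib, Finset.sum_sub_distrib,
          ← Finset.sum_mul, hw₁, one_mul, sum_inner, real_inner_smul_left]

end Smooth

theorem stimulus_strongly_convex_step_general {d : ℕ} (S : ℕ) (μ L η : ℝ)
    (hμ : 0 < μ) (hη : 0 < η)
    (f : Fin S → EuclideanSpace ℝ (Fin d) → ℝ)
    (hdiff : ∀ s, Differentiable ℝ (f s))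
    (hlip : ∀ s, ∀ x y : EuclideanSpace ℝ (Fin d),
      ‖gradient (f s) x - gradient (f s) y‖ ≤ L * ‖x - y‖)
    (hsc : ∀ s, ∀ x y : EuclideanSpace ℝ (Fin d),
      f s y ≥ f s x + ⟪gradient (f s) x, y - x⟫ + (μ / 2) * ‖y - x‖ ^ 2)
    (lam : Fin S → ℝ) (hlam_nonneg : ∀ s, 0 ≤ lam s) (hlam_sum : ∑ s : Fin S, lam s = 1)
    (u : Fin S → EuclideanSpace ℝ (Fin d))
    (dvec : EuclideanSpace ℝ (Fin d)) (hdvec : dvec = ∑ s : Fin S, lam s • u s)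
    (x xstar x' : EuclideanSpace ℝ (Fin d)) (hx' : x' = x - η • dvec) :
    ∑ s : Fin S, lam s * (f s x' - f s xstar)
      ≤ (1 / (2 * η)) * ((1 - 3 * μ * η / 4) * ‖x - xstar‖ ^ 2 - ‖x' - xstar‖ ^ 2)
        - (η / 2 - μ * η ^ 2 / 8 - L * η ^ 2 / 2) * ‖dvec‖ ^ 2
        + (4 / μ) * ∑ s : Fin S, lam s * ‖gradient (f s) x - u s‖ ^ 2 := by
  set E := ∑ s, lam s • (gradient (f s) x - u s)
  have hgrad : ∑ s, lam s • gradient (f s) x = dvec + E := by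
    simp only [hdvec, E, smul_sub, Finset.sum_sub_distrib, add_sub_cancel]
  have havg := sum_mul_sub_le_of_lipschitz_gradient_of_strongConvex hdiff hlip hsc
    (fun s _ => hlam_nonneg s) hlam_sum x x' xstar
  have hmove : ‖x' - x‖ = η * ‖dvec‖ := by
    rw [hx', sub_sub_cancel_left, norm_neg, norm_smul, Real.norm_of_nonneg hη.le]
  have hpolar := inner_sub_smul_sub_eq hη.ne' dvec x xstar
  have hyoung : ⟪E, x' - xstar⟫
      ≤ 4 / μ * ‖E‖ ^ 2 + μ / 8 * ‖x - xstar‖ ^ 2 + μ / 8 * (η * ‖dvec‖) ^ 2 := by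
    have hδ : 0 < μ / 8 := by positivity
    have h₁ := real_inner_le_norm_sq_div_add_mul_norm_sq hδ E (x - xstar)
    have h₂ := real_inner_le_norm_sq_div_add_mul_norm_sq hδ E (-(η • dvec))
    rw [norm_neg, norm_smul, Real.norm_of_nonneg hη.le] at h₂
    have hsplit : ⟪E, x' - xstar⟫ = ⟪E, x - xstar⟫ + ⟪E, -(η • dvec)⟫ := by
      rw [hx', sub_right_comm, sub_eq_add_neg, inner_add_right]
    rw [hsplit]
    linear_combination h₁ + h₂
  have hjensen := norm_sum_smul_sq_le (t := Finset.univ) (fun s _ => hlam_nonneg s) hlam_sum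
    (fun s => gradient (f s) x - u s)
  have hcoef : 1 / (2 * η) * ((1 - 3 * μ * η / 4) * ‖x - xstar‖ ^ 2 - ‖x' - xstar‖ ^ 2)
      = 1 / (2 * η) * (‖x - xstar‖ ^ 2 - ‖x' - xstar‖ ^ 2) - 3 * μ / 8 * ‖x - xstar‖ ^ 2 := by
    field_simp; ring
  rw [hgrad, inner_add_left, hx', hpolar, ← hx', hmove] at havg
  rw [hcoef]
  linarith [mul_le_mul_of_nonneg_left hjensen (by positivity : (0 : ℝ) ≤ 4 / μ)]

/-- Key per-step strongly convex inequality (Eq. (23)) in the proof of Theorem 2. -/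
theorem stimulus_strongly_convex_step {d : ℕ} (S : ℕ) (hS : 1 ≤ S) (μ L η : ℝ)
    (hμ : 0 < μ) (hL : 0 ≤ L) (hη : 0 < η)
    (f : Fin S → EuclideanSpace ℝ (Fin d) → ℝ)
    (hdiff : ∀ s, Differentiable ℝ (f s))
    (hlip : ∀ s, ∀ x y : EuclideanSpace ℝ (Fin d),
      ‖gradient (f s) x - gradient (f s) y‖ ≤ L * ‖x - y‖)
    (hsc : ∀ s, ∀ x y : EuclideanSpace ℝ (Fin d),
      f s y ≥ f s x + ⟪gradient (f s) x, y - x⟫ + (μ / 2) * ‖y - x‖ ^ 2)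
    (lam : Fin S → ℝ) (hlam_nonneg : ∀ s, 0 ≤ lam s) (hlam_sum : ∑ s : Fin S, lam s = 1)
    (u : Fin S → EuclideanSpace ℝ (Fin d))
    (dvec : EuclideanSpace ℝ (Fin d)) (hdvec : dvec = ∑ s : Fin S, lam s • u s)
    (x xstar x' : EuclideanSpace ℝ (Fin d)) (hx' : x' = x - η • dvec) :
    ∑ s : Fin S, lam s * (f s x' - f s xstar)
      ≤ (1 / (2 * η)) * ((1 - 3 * μ * η / 4) * ‖x - xstar‖ ^ 2 - ‖x' - xstar‖ ^ 2)
        - (η / 2 - μ * η ^ 2 / 8 - L * η ^ 2 / 2) * ‖dvec‖ ^ 2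
        + (4 / μ) * ∑ s : Fin S, lam s * ‖gradient (f s) x - u s‖ ^ 2 :=
  stimulus_strongly_convex_step_general S μ L η hμ hη f hdiff hlip hsc lam hlam_nonneg hlam_sum u
    dvec hdvec x xstar x' hx'
end

section
/- Adaptive-batching window telescope (deterministic core of Theorem 5 for STIMULUS+). Let η ≥ 0, L ≥ 0, q ≥ 1, c_γ > 0, c_ε > 0, ε ≥ 0, let a, t ∈ ℕ with a·q ≤ t ≤ (a+1)·q − 1, let f : ℝ^d → ℝ, and let (x_j), (d_j) be sequences in ℝ^d. Assume that for every j with a·q ≤ j ≤ t: f(x_{j+1}) ≤ f(x_j) − (η/4)·‖d_j‖² + (η³·L²/(2q))·Σ_{i=aq}^{j} ‖d_i‖² + (η/2)·(γ_j/c_γ + ε/c_ε), where γ_j := (1/q)·Σ_{i=aq}^{j} ‖d_i‖². Then f(x_{t+1}) ≤ f(x_{aq}) − (η/4 − η³·L²/2 − η/(2·c_γ))·Σ_{j=aq}^{t} ‖d_j‖² + (η/2)·(t − a·q + 1)·ε/c_ε. -/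
/-!
Substituting the definition of `γ j` turns the variance term into `(B / q) · S_j` with
`B = η³L²/2 + η/(2c_γ)` and `S_j = Σ_{i=aq}^{j} ‖d_i‖²`, so every step has the same shape as the
smoothness term. Telescoping the one-step bounds over the window then leaves `(B / q) · Σ_j S_j`,
and since the partial sums increase and the window has at most `q` steps, `Σ_j S_j ≤ q · S_t`.
-/

open Finset

theorem le_add_sum_Icc_of_forall_succ_le {M : Type*} [AddCommMonoid M] [PartialOrder M]
    [IsOrderedAddMonoid M] {u g : ℕ → M} {m n : ℕ} (hmn : m ≤ n)
    (h : ∀ j, m ≤ j → j ≤ n → u (j + 1) ≤ u j + g j) :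
    u (n + 1) ≤ u m + ∑ j ∈ Icc m n, g j := by
  induction n, hmn using Nat.le_induction with
  | base => simpa using h m le_rfl le_rfl
  | succ n hmn ih =>
    calc u (n + 1 + 1) ≤ u (n + 1) + g (n + 1) := h (n + 1) (by omega) le_rfl
      _ ≤ u m + ∑ j ∈ Icc m n, g j + g (n + 1) :=
          add_le_add_left (ih fun j hj hjn => h j hj (by omega)) _
      _ = u m + ∑ j ∈ Icc m (n + 1), g j := by
          rw [sum_Icc_succ_top (by omega), add_assoc]

theorem sum_Icc_sum_Icc_le_card_nsmul {M : Type*} [AddCommMonoid M] [PartialOrder M]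
    [IsOrderedAddMonoid M] {w : ℕ → M} (hw : ∀ i, 0 ≤ w i) (m n : ℕ) :
    ∑ j ∈ Icc m n, ∑ i ∈ Icc m j, w i ≤ #(Icc m n) • ∑ i ∈ Icc m n, w i :=
  sum_le_card_nsmul _ _ _ fun _ hj =>
    sum_le_sum_of_subset_of_nonneg (Icc_subset_Icc_right (mem_Icc.mp hj).2)
      fun i _ _ => hw i

theorem window_telescope {u w : ℕ → ℝ} {α B e : ℝ} {q m n : ℕ} (hw : ∀ i, 0 ≤ w i)
    (hB : 0 ≤ B) (hmn : m ≤ n) (hlen : n + 1 ≤ m + q)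
    (hstep : ∀ j, m ≤ j → j ≤ n →
      u (j + 1) ≤ u j - α * w j + B / q * ∑ i ∈ Icc m j, w i + e) :
    u (n + 1) ≤ u m - (α - B) * ∑ j ∈ Icc m n, w j + ((n : ℝ) - m + 1) * e := by
  set S := ∑ j ∈ Icc m n, w j
  have htel := le_add_sum_Icc_of_forall_succ_le
    (g := fun j => -(α * w j) + B / q * ∑ i ∈ Icc m j, w i + e) hmn
    fun j hj hjn => (hstep j hj hjn).trans_eq (by ring)
  have hcard : (#(Icc m n) : ℝ) = n - m + 1 := by
    rw [Nat.card_Icc]; push_cast [show m ≤ n + 1 by omega]; ring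
  have hratio : (#(Icc m n) : ℝ) / q ≤ 1 :=
    div_le_one_of_le₀ (by rw [Nat.card_Icc]; exact_mod_cast (by omega)) q.cast_nonneg
  have hpartial : B / q * ∑ j ∈ Icc m n, ∑ i ∈ Icc m j, w i ≤ B * S :=
    calc B / q * ∑ j ∈ Icc m n, ∑ i ∈ Icc m j, w i
        ≤ B / q * (#(Icc m n) * S) := by
          gcongr
          simpa only [nsmul_eq_mul] using sum_Icc_sum_Icc_le_card_nsmul hw m n
      _ = B * (#(Icc m n) / q) * S := by ring
      _ ≤ B * S := by
          gcongr
          · exact sum_nonneg fun i _ => hw i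
          · exact mul_le_of_le_one_right hB hratio
  simp only [sum_add_distrib, sum_neg_distrib, ← mul_sum, sum_const, nsmul_eq_mul,
    hcard] at htel
  linarith

theorem stimulus_plus_window_telescope_general {dim : ℕ} (η L : ℝ) (hη : 0 ≤ η)
    (q : ℕ) (hq : 1 ≤ q) (cγ cε ε : ℝ) (hcγ : 0 < cγ)
    (a t : ℕ) (hat : a * q ≤ t) (hta : t ≤ (a + 1) * q - 1)
    (f : EuclideanSpace ℝ (Fin dim) → ℝ)
    (x d : ℕ → EuclideanSpace ℝ (Fin dim))
    (γ : ℕ → ℝ)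
    (hγ : ∀ j, γ j = (1 / (q : ℝ)) * ∑ i ∈ Finset.Icc (a * q) j, ‖d i‖ ^ 2)
    (hstep : ∀ j, a * q ≤ j → j ≤ t →
      f (x (j + 1)) ≤ f (x j) - (η / 4) * ‖d j‖ ^ 2
        + (η ^ 3 * L ^ 2 / (2 * (q : ℝ))) * ∑ i ∈ Finset.Icc (a * q) j, ‖d i‖ ^ 2
        + (η / 2) * (γ j / cγ + ε / cε)) :
    f (x (t + 1)) ≤ f (x (a * q))
      - (η / 4 - η ^ 3 * L ^ 2 / 2 - η / (2 * cγ)) * ∑ j ∈ Finset.Icc (a * q) t, ‖d j‖ ^ 2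
      + (η / 2) * ((t : ℝ) - (a * q : ℕ) + 1) * (ε / cε) := by
  have hB : 0 ≤ η ^ 3 * L ^ 2 / 2 + η / (2 * cγ) := by positivity
  have hlen : t + 1 ≤ a * q + q := by rw [add_one_mul] at hta; omega
  have hwindow := window_telescope (u := fun j => f (x j)) (α := η / 4)
    (e := η / 2 * (ε / cε)) (fun i => sq_nonneg ‖d i‖) hB hat hlen
    fun j hj hjt => (hstep j hj hjt).trans_eq (by rw [hγ]; ring)
  exact hwindow.trans_eq (by ring)

/-- Adaptive-batching window telescope: deterministic core of Theorem 5 for STIMULUS+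
(Eqs. (53)–(54) in the paper's appendix). -/
theorem stimulus_plus_window_telescope {dim : ℕ} (η L : ℝ) (hη : 0 ≤ η) (hL : 0 ≤ L)
    (q : ℕ) (hq : 1 ≤ q) (cγ cε ε : ℝ) (hcγ : 0 < cγ) (hcε : 0 < cε) (hε : 0 ≤ ε)
    (a t : ℕ) (hat : a * q ≤ t) (hta : t ≤ (a + 1) * q - 1)
    (f : EuclideanSpace ℝ (Fin dim) → ℝ)
    (x d : ℕ → EuclideanSpace ℝ (Fin dim))
    (γ : ℕ → ℝ)
    (hγ : ∀ j, γ j = (1 / (q : ℝ)) * ∑ i ∈ Finset.Icc (a * q) j, ‖d i‖ ^ 2)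
    (hstep : ∀ j, a * q ≤ j → j ≤ t →
      f (x (j + 1)) ≤ f (x j) - (η / 4) * ‖d j‖ ^ 2
        + (η ^ 3 * L ^ 2 / (2 * (q : ℝ))) * ∑ i ∈ Finset.Icc (a * q) j, ‖d i‖ ^ 2
        + (η / 2) * (γ j / cγ + ε / cε)) :
    f (x (t + 1)) ≤ f (x (a * q))
      - (η / 4 - η ^ 3 * L ^ 2 / 2 - η / (2 * cγ)) * ∑ j ∈ Finset.Icc (a * q) t, ‖d j‖ ^ 2
      + (η / 2) * ((t : ℝ) - (a * q : ℕ) + 1) * (ε / cε) :=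
  stimulus_plus_window_telescope_general η L hη q hq cγ cε ε hcγ a t hat hta f x d γ hγ hstep
end
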